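/- Let G be the group of order 125 with underlying set ZMod 25 × ZMod 5 and multiplication (a,c) * (a',c') = (a + 6^c * a', c + c') (the semidirect product ℤ/25 ⋊ ℤ/5 in which the generator 1 of ℤ/5 acts on ℤ/25 by multiplication by 6). Let X = Option G, writing ∞ for none, with G acting on X by left translation (g • some x = some (g * x), g • ∞ = ∞). Let ℬ be the family of all left translates of the five base blocks B1 = {(0,0),(0,1),(1,0),(3,3),(6,4),(9,4)}, B2 = {(0,0),(0,2),(7,1),(9,0),(19,1),(24,3)}, B3 = {(0,0),(1,2),(8,0),(10,4),(20,2),(22,0)}, B4 = {(0,0),(2,2),(5,1),(16,4),(18,4),(19,0)}, B5 = {(0,0),(5,0),(10,0),(15,0),(20,0)} ∪ {∞} (group elements embedded in X via some). Then every block of ℬ has exactly 6 elements and every pair of distinct points of X is contained in exactly one block of ℬ; that is, ℬ is a Steiner system S(2,6,126) (a unital of order 5) on X, invariant under the left translation action with the single fixed point ∞. -/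

import Mathlib

/-- Multiplication of the semidirect product `ℤ/25 ⋊ ℤ/5` with underlying set
`ZMod 25 × ZMod 5`, where the generator `1` of `ℤ/5` acts on the generator `1` of
`ℤ/25` by sending it to `6`: `(a,c) * (a',c') = (a + 6^c * a', c + c')`. -/
def gmul5 (p q : ZMod 25 × ZMod 5) : ZMod 25 × ZMod 5 :=
  (p.1 + 6 ^ p.2.val * q.1, p.2 + q.2)

/-- Left translation action of `G` on `Option G`:
`g • some x = some (g * x)`, `g • ∞ = ∞`. -/
def trG5 (g : ZMod 25 × ZMod 5) :
    Option (ZMod 25 × ZMod 5) → Option (ZMod 25 × ZMod 5) :=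
  Option.map (gmul5 g)

/-- The five base blocks of the difference family. -/
def baseBlocks5 : List (Finset (Option (ZMod 25 × ZMod 5))) :=
  [ {some (0, 0), some (0, 1), some (1, 0), some (3, 3), some (6, 4), some (9, 4)},
    {some (0, 0), some (0, 2), some (7, 1), some (9, 0), some (19, 1), some (24, 3)},
    {some (0, 0), some (1, 2), some (8, 0), some (10, 4), some (20, 2), some (22, 0)},
    {some (0, 0), some (2, 2), some (5, 1), some (16, 4), some (18, 4), some (19, 0)},
    {some (0, 0), some (5, 0), some (10, 0), some (15, 0), some (20, 0), none} ]

/-- The family of all left translates of the base blocks. -/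
def blocks5 : Set (Finset (Option (ZMod 25 × ZMod 5))) :=
  { B | ∃ g : ZMod 25 × ZMod 5, ∃ B0 ∈ baseBlocks5, B = B0.image (trG5 g) }


/-!
`G` fixes `∞`, acts regularly on the other 125 points, and `ℬ` is the union of the `G`-orbits
of the base blocks. The 120 quotients `x⁻¹ * y` of distinct points of `B1, …, B4` and the four
nontrivial elements of the subgroup `{(5k, 0)}` (the finite part of `B5`, and its stabiliser)
are distinct and exhaust `G ∖ {1}`: so distinct blocks share at most one point, and by counting
every pair lies in some block.

By translation invariance both properties reduce to finitely many configurations, which are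
checked by kernel computation: a base block `B` against a translate `g • B'` in which `g` carries
a finite point of `B'` into `B`, and pairs through `(0, 0)`, whose blocks are the translates of
base blocks by inverses of their own points.
-/

open Finset
open scoped Pointwise

section Translates

variable (G : Type*) {α ι : Type*} [Group G] [MulAction G α] [DecidableEq α]

def translates (b : ι → Finset α) : Set (Finset α) :=
  {B | ∃ g : G, ∃ i, B = g • b i}

variable {G} {b : ι → Finset α}

lemma smul_mem_translates (g : G) {B : Finset α} (hB : B ∈ translates G b) :
    g • B ∈ translates G b := by
  obtain ⟨h, i, rfl⟩ := hB
  exact ⟨g * h, i, (mul_smul g h (b i)).symm⟩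

lemma card_of_mem_translates {k : ℕ} (hb : ∀ i, #(b i) = k) {B : Finset α}
    (hB : B ∈ translates G b) : #B = k := by
  obtain ⟨g, i, rfl⟩ := hB
  rw [card_smul_finset, hb i]

lemma eq_of_mem_translates_of_two_le_card_inter
    (hb : ∀ i j (g : G), b i ≠ g • b j → #(b i ∩ g • b j) ≤ 1)
    {B B' : Finset α} (hB : B ∈ translates G b) (hB' : B' ∈ translates G b)
    (h : 2 ≤ #(B ∩ B')) : B = B' := by
  obtain ⟨g, i, rfl⟩ := hB
  obtain ⟨g', j, rfl⟩ := hB'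
  have hg : g' • b j = g • (g⁻¹ * g') • b j := by rw [smul_smul, mul_inv_cancel_left]
  rw [hg, ← smul_finset_inter, card_smul_finset] at h
  rw [hg]
  by_contra hne
  have := hb i j (g⁻¹ * g') fun h₀ => hne (congrArg (g • ·) h₀)
  omega

lemma existsUnique_mem_translates_of_exists
    (hb : ∀ i j (g : G), b i ≠ g • b j → #(b i ∩ g • b j) ≤ 1)
    {p q : α} (hpq : p ≠ q) (h : ∃ B ∈ translates G b, p ∈ B ∧ q ∈ B) :
    ∃! B, B ∈ translates G b ∧ p ∈ B ∧ q ∈ B := by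
  obtain ⟨B, hB, hp, hq⟩ := h
  refine ⟨B, ⟨hB, hp, hq⟩, fun B' ⟨hB', hp', hq'⟩ => ?_⟩
  refine eq_of_mem_translates_of_two_le_card_inter hb hB' hB ?_
  calc 2 = #{p, q} := (card_pair hpq).symm
    _ ≤ #(B' ∩ B) := card_le_card (by simp [insert_subset_iff, *])

lemma exists_mem_translates_of_mem_orbit {x₀ : α}
    (h : ∀ y ≠ x₀, ∃ B ∈ translates G b, x₀ ∈ B ∧ y ∈ B)
    {p q : α} (hp : p ∈ MulAction.orbit G x₀) (hpq : p ≠ q) :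
    ∃ B ∈ translates G b, p ∈ B ∧ q ∈ B := by
  obtain ⟨g, rfl⟩ := hp
  obtain ⟨B, hB, hx₀, hq⟩ := h (g⁻¹ • q) fun h₀ => hpq (by simp [← h₀])
  refine ⟨g • B, smul_mem_translates g hB, smul_mem_smul_finset hx₀, ?_⟩
  simpa using smul_mem_smul_finset (a := g) hq

end Translates

section OptionPoints

variable {G β ι : Type*} [Group G] [MulAction G β] [DecidableEq β]

lemma exists_smul_eq_of_two_le_card_inter_smul {s t : Finset (Option β)} {g : G}
    (h : 2 ≤ #(s ∩ g • t)) : ∃ u ∈ eraseNone s, ∃ x ∈ eraseNone t, g • x = u := by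
  obtain ⟨u, hu⟩ : ∃ u, some u ∈ s ∩ g • t := by
    obtain ⟨p, hp, q, hq, hpq⟩ := one_lt_card.mp h
    cases p with
    | some u => exact ⟨u, hp⟩
    | none => cases q with
      | some u => exact ⟨u, hq⟩
      | none => exact absurd rfl hpq
  obtain ⟨hus, hut⟩ := mem_inter.mp hu
  obtain ⟨y, hy, hgy⟩ := mem_smul_finset.mp hut
  cases y with
  | none => cases hgy
  | some x => exact ⟨u, mem_eraseNone.mpr hus, x, mem_eraseNone.mpr hy, Option.some_injective _ hgy⟩

lemma exists_mem_translates_of_ne {b : ι → Finset (Option β)} {x₀ : Option β}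
    (horbit : ∀ x : β, some x ∈ MulAction.orbit G x₀)
    (h : ∀ y ≠ x₀, ∃ B ∈ translates G b, x₀ ∈ B ∧ y ∈ B) {p q : Option β} (hpq : p ≠ q) :
    ∃ B ∈ translates G b, p ∈ B ∧ q ∈ B := by
  cases p with
  | some a => exact exists_mem_translates_of_mem_orbit h (horbit a) hpq
  | none =>
    cases q with
    | none => exact absurd rfl hpq
    | some a =>
      obtain ⟨B, hB, hq, hp⟩ := exists_mem_translates_of_mem_orbit h (horbit a) hpq.symm
      exact ⟨B, hB, hp, hq⟩

end OptionPoints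

lemma six_pow_val_add (a b : ZMod 5) :
    (6 : ZMod 25) ^ (a + b).val = 6 ^ a.val * 6 ^ b.val := by
  revert a b; decide

lemma gmul5_assoc (g h k : ZMod 25 × ZMod 5) :
    gmul5 (gmul5 g h) k = gmul5 g (gmul5 h k) := by
  refine Prod.ext ?_ (add_assoc _ _ _)
  simp only [gmul5, six_pow_val_add]
  ring

lemma gmul5_zero_left (g : ZMod 25 × ZMod 5) : gmul5 0 g = g := by
  simp [gmul5]

lemma gmul5_inv_left (g : ZMod 25 × ZMod 5) :
    gmul5 (-(6 ^ (-g.2).val) * g.1, -g.2) g = 0 := by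
  refine Prod.ext ?_ (neg_add_cancel _)
  simp only [gmul5, Prod.fst_zero]
  ring

/-- A type synonym, since `ZMod 25 × ZMod 5` already carries the componentwise multiplication. -/
def G125 : Type := ZMod 25 × ZMod 5

namespace G125

def ofPair : ZMod 25 × ZMod 5 ≃ G125 := Equiv.refl _

instance : DecidableEq G125 := inferInstanceAs (DecidableEq (ZMod 25 × ZMod 5))
instance : Mul G125 := ⟨gmul5⟩
instance : One G125 := ⟨ofPair 0⟩
instance : Inv G125 := ⟨fun g : ZMod 25 × ZMod 5 => ofPair (-(6 ^ (-g.2).val) * g.1, -g.2)⟩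
instance : Group G125 := Group.ofLeftAxioms gmul5_assoc gmul5_zero_left gmul5_inv_left
instance : MulAction G125 (ZMod 25 × ZMod 5) := inferInstanceAs (MulAction G125 G125)

lemma smul_eq_iff {g : G125} {x u : ZMod 25 × ZMod 5} :
    g • x = u ↔ g = ofPair u * (ofPair x)⁻¹ := by
  rw [eq_mul_inv_iff_mul_eq]
  exact Iff.rfl

lemma inv_smul_self (x : ZMod 25 × ZMod 5) : (ofPair x)⁻¹ • x = 0 :=
  inv_mul_cancel (ofPair x)

lemma mem_orbit_some_zero (x : ZMod 25 × ZMod 5) :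
    some x ∈ MulAction.orbit G125 (some (0 : ZMod 25 × ZMod 5)) :=
  ⟨ofPair x, congrArg some (mul_one (ofPair x))⟩

lemma eq_none_of_smul_eq_self {g : G125} (hg : g ≠ 1) {x : Option (ZMod 25 × ZMod 5)}
    (hx : g • x = x) : x = none := by
  cases x with
  | none => rfl
  | some y =>
    have hy : g * ofPair y = ofPair y := Option.some_injective _ hx
    exact absurd (mul_eq_right.mp hy) hg

end G125

open G125

lemma blocks5_eq_translates : blocks5 = translates G125 baseBlocks5.get := by
  ext B
  simp only [blocks5, translates, List.mem_iff_get, Set.mem_ofPred_eq]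
  constructor
  · rintro ⟨g, _, ⟨i, rfl⟩, rfl⟩
    exact ⟨ofPair g, i, rfl⟩
  · rintro ⟨g, i, rfl⟩
    exact ⟨ofPair.symm g, _, ⟨i, rfl⟩, rfl⟩

lemma card_baseBlocks5_get : ∀ i, #(baseBlocks5.get i) = 6 := by
  decide

lemma card_inter_smul_baseBlocks5_le_one_of_mem_eraseNone :
    ∀ i j, ∀ u ∈ eraseNone (baseBlocks5.get i), ∀ x ∈ eraseNone (baseBlocks5.get j),
      baseBlocks5.get i ≠ (ofPair u * (ofPair x)⁻¹) • baseBlocks5.get j →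
      #(baseBlocks5.get i ∩ (ofPair u * (ofPair x)⁻¹) • baseBlocks5.get j) ≤ 1 := by
  decide +kernel

lemma card_inter_smul_baseBlocks5_le_one (i j) (g : G125)
    (hne : baseBlocks5.get i ≠ g • baseBlocks5.get j) :
    #(baseBlocks5.get i ∩ g • baseBlocks5.get j) ≤ 1 := by
  by_contra! h
  obtain ⟨u, hu, x, hx, hgx⟩ := exists_smul_eq_of_two_le_card_inter_smul h
  rw [smul_eq_iff] at hgx
  subst hgx
  have := card_inter_smul_baseBlocks5_le_one_of_mem_eraseNone i j u hu x hx hne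
  omega

lemma exists_inv_smul_baseBlocks5_mem :
    ∀ y ≠ some 0, ∃ i, ∃ x ∈ eraseNone (baseBlocks5.get i),
      y ∈ (ofPair x)⁻¹ • baseBlocks5.get i := by
  decide +kernel

lemma exists_mem_translates_of_ne_some_zero (y : Option (ZMod 25 × ZMod 5)) (hy : y ≠ some 0) :
    ∃ B ∈ translates G125 baseBlocks5.get, some 0 ∈ B ∧ y ∈ B := by
  obtain ⟨i, x, hx, hyB⟩ := exists_inv_smul_baseBlocks5_mem y hy
  refine ⟨_, ⟨_, i, rfl⟩, ?_, hyB⟩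
  rw [← inv_smul_self x]
  exact smul_mem_smul_finset (mem_eraseNone.mp hx)

theorem unital_Z25semiZ5_design1 :
    (∀ B ∈ blocks5, B.card = 6) ∧
    (∀ p q : Option (ZMod 25 × ZMod 5), p ≠ q →
      ∃! B, B ∈ blocks5 ∧ p ∈ B ∧ q ∈ B) ∧
    (∀ g : ZMod 25 × ZMod 5, ∀ B ∈ blocks5, B.image (trG5 g) ∈ blocks5) ∧
    (∀ g : ZMod 25 × ZMod 5, trG5 g none = none) ∧
    (∀ g : ZMod 25 × ZMod 5, g ≠ (0, 0) →
      ∀ x : Option (ZMod 25 × ZMod 5), trG5 g x = x → x = none) := by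
  rw [blocks5_eq_translates]
  exact ⟨fun B => card_of_mem_translates card_baseBlocks5_get,
    fun p q hpq => existsUnique_mem_translates_of_exists card_inter_smul_baseBlocks5_le_one hpq
      (exists_mem_translates_of_ne mem_orbit_some_zero exists_mem_translates_of_ne_some_zero hpq),
    fun g B => smul_mem_translates (ofPair g), fun g => rfl,
    fun g hg x => eq_none_of_smul_eq_self (ofPair.injective.ne hg)⟩
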